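/- arXiv:1211.1963 — 2 statements merged into one kernel-verified Lean document; each statement's English description precedes it below -/
import Mathlib

section
/- If J is a positive definite real symmetric tridiagonal (Jacobi) matrix of finite size with Cholesky decomposition J = L L*, where L is lower triangular with nonzero determinant, then the Darboux transform J̃ = L* L is also a symmetric tridiagonal matrix and has the same spectrum as J. -/
open Matrix

/-- The Darboux transform `J̃ = Lᵀ * L` of a positive definite Jacobi (symmetric
tridiagonal) matrix `J = L * Lᵀ`, with `L` lower triangular of nonzero determinant,
is again symmetric and tridiagonal, and has the same spectrum as `J`. -/
theorem darboux_transform_of_cholesky (n : ℕ) (J L : Matrix (Fin n) (Fin n) ℝ)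
    (hJsymm : J.IsSymm)
    (hJtri : ∀ i j : Fin n, 1 < ((i : ℤ) - (j : ℤ)).natAbs → J i j = 0)
    (hJoff : ∀ i j : Fin n, ((i : ℤ) - (j : ℤ)).natAbs = 1 → 0 < J i j)
    (hJpos : J.PosDef)
    (hL : ∀ i j : Fin n, (i : ℕ) < (j : ℕ) → L i j = 0)
    (hLdet : L.det ≠ 0)
    (hChol : J = L * Lᵀ) :
    (Lᵀ * L).IsSymm ∧
    (∀ i j : Fin n, 1 < ((i : ℤ) - (j : ℤ)).natAbs → (Lᵀ * L) i j = 0) ∧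
    spectrum ℝ (Lᵀ * L) = spectrum ℝ J := by
  -- diagonal entries of L are nonzero
  have hdetprod : L.det = ∏ i, L i i :=
    Matrix.det_of_lowerTriangular L (fun i j hij => hL i j hij)
  have hdiag : ∀ i : Fin n, L i i ≠ 0 := by
    intro i
    rw [hdetprod] at hLdet
    exact Finset.prod_ne_zero_iff.mp hLdet i (Finset.mem_univ i)
  -- L is lower bidiagonal
  have Hbi : ∀ m : ℕ, ∀ j i : Fin n, (j : ℕ) = m → (j : ℕ) + 1 < (i : ℕ) → L i j = 0 := by
    intro m
    induction m using Nat.strong_induction_on with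
    | _ m IH =>
      intro j i hj hij
      have hJ0 : J i j = 0 := hJtri i j (by omega)
      rw [hChol, Matrix.mul_apply] at hJ0
      rw [Finset.sum_eq_single j] at hJ0
      · rw [Matrix.transpose_apply] at hJ0
        rcases mul_eq_zero.mp hJ0 with h | h
        · exact h
        · exact absurd h (hdiag j)
      · intro k _ hk
        rcases lt_trichotomy (k : ℕ) (j : ℕ) with h | h | h
        · have : L i k = 0 := IH (k : ℕ) (by omega) k i rfl (by omega)
          simp [this]
        · exact absurd (Fin.ext h) hk
        · have : L j k = 0 := hL j k h
          simp [Matrix.transpose_apply, this]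
      · intro h
        exact absurd (Finset.mem_univ j) h
  have hbi : ∀ i j : Fin n, (j : ℕ) + 1 < (i : ℕ) → L i j = 0 :=
    fun i j h => Hbi (j : ℕ) j i rfl h
  -- L a b = 0 unless b ≤ a ≤ b+1
  have hzero : ∀ a b : Fin n, (a : ℕ) ≠ (b : ℕ) → (a : ℕ) ≠ (b : ℕ) + 1 → L a b = 0 := by
    intro a b h1 h2
    rcases lt_trichotomy (a : ℕ) (b : ℕ) with h | h | h
    · exact hL a b h
    · omega
    · exact hbi a b (by omega)
  refine ⟨?_, ?_, ?_⟩
  · rw [Matrix.IsSymm, Matrix.transpose_mul, Matrix.transpose_transpose]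
  · intro i j hij
    have hij' : (i : ℕ) + 1 < (j : ℕ) ∨ (j : ℕ) + 1 < (i : ℕ) := by omega
    rw [Matrix.mul_apply]
    apply Finset.sum_eq_zero
    intro k _
    rw [Matrix.transpose_apply]
    by_cases hki : (k : ℕ) = (i : ℕ) ∨ (k : ℕ) = (i : ℕ) + 1
    · have : L k j = 0 := hzero k j (by omega) (by omega)
      simp [this]
    · push_neg at hki
      have : L k i = 0 := hzero k i hki.1 hki.2
      simp [this]
  · have hU : IsUnit L := (Matrix.isUnit_iff_isUnit_det L).mpr hLdet.isUnit
    obtain ⟨u, hu⟩ := hU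
    have key : Lᵀ * L = (u⁻¹ : (Matrix (Fin n) (Fin n) ℝ)ˣ) * J * (u : Matrix (Fin n) (Fin n) ℝ) := by
      rw [hChol, ← hu, ← mul_assoc, Units.inv_mul, one_mul]
    rw [key, spectrum.units_conjugate']
end

section
/- Let P_n satisfy the Bannai-Ito recurrence P_{n+1} + (ρ₁ − A_n − C_n) P_n + A_{n−1} C_n P_{n−1} = x P_n with A_n, C_n the Bannai-Ito coefficients, and define W_n(x) = (P_{n+1}(x) − A_n P_n(x))/(x − ρ₁). Then the recurrence coefficients of W_n are ρ₁ − A_n − C_{n+1} = −(−1)^n ρ₂ (i.e. W_{n+1} + (−1)^n ρ₂ W_n + v_n W_{n−1} = x W_n) with v_{2n} = −n(n + ρ₁ − r₁ + 1/2)(n + ρ₁ − r₂ + 1/2)(n − r₁ − r₂) / ((2n + 1 + g)(2n + g)) and v_{2n+1} = −(n + g + 1)(n + ρ₁ + ρ₂ + 1)(n + ρ₂ − r₁ + 1/2)(n + ρ₂ − r₂ + 1/2) / ((2n + 1 + g)(2n + g + 2)), where g = ρ₁ + ρ₂ − r₁ − r₂. -/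
open Polynomial

private lemma bi_step (ρ₁ ε vv a a1 a2 c1 c2 : ℝ)
    (hε : ε = ρ₁ - a1 - c2) (hv : vv = c1 * a1)
    (Pn Pn1 Pn2 Pn3 Wn Wn1 Wn2 : Polynomial ℝ)
    (e1 : Pn2 + C (ρ₁ - a1 - c1) * Pn1 + C (a * c1) * Pn = X * Pn1)
    (e2 : Pn3 + C (ρ₁ - a2 - c2) * Pn2 + C (a1 * c2) * Pn1 = X * Pn2)
    (w0 : (X - C ρ₁) * Wn = Pn1 - C a * Pn)
    (w1 : (X - C ρ₁) * Wn1 = Pn2 - C a1 * Pn1)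
    (w2 : (X - C ρ₁) * Wn2 = Pn3 - C a2 * Pn2) :
    Wn2 + C ε * Wn1 + C vv * Wn = X * Wn1 := by
  subst hε hv
  refine mul_left_cancel₀ (X_sub_C_ne_zero ρ₁) ?_
  simp only [map_sub, map_mul] at e1 e2 ⊢
  linear_combination w2 + (C ρ₁ - C a1 - C c2 - X) * w1 + C c1 * C a1 * w0
    + e2 - C a1 * e1

private lemma bi_base (ρ₁ ρ₂ a0 a1 c1 : ℝ) (hρ : ρ₂ = ρ₁ - a0 - c1)
    (P0 P1 P2 W0 W1 : Polynomial ℝ) (hP0 : P0 = 1) (hP1 : P1 = X - C ρ₁ + C a0)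
    (e0 : P2 + C (ρ₁ - a1 - c1) * P1 + C (a0 * c1) * P0 = X * P1)
    (w0 : (X - C ρ₁) * W0 = P1 - C a0 * P0)
    (w1 : (X - C ρ₁) * W1 = P2 - C a1 * P1) :
    W1 + C ρ₂ * W0 = X * W0 := by
  subst hρ
  refine mul_left_cancel₀ (X_sub_C_ne_zero ρ₁) ?_
  simp only [map_sub, map_mul] at e0 ⊢
  linear_combination w1 + (C ρ₁ - C a0 - C c1 - X) * w0 + e0
    + (- C a0) * hP1 + (C a0 * C a0 - C a0 * C ρ₁ + C a0 * X) * hP0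

private lemma bi_key (ρ₁ ρ₂ r₁ r₂ g : ℝ)
    (hg : g = ρ₁ + ρ₂ - r₁ - r₂)
    (hden : ∀ n : ℕ, (n : ℝ) + g ≠ 0)
    (A Cf v : ℕ → ℝ)
    (hA : ∀ n : ℕ, A n = if Even n then
        ((n : ℝ) + 1 + 2 * ρ₁ - 2 * r₁) * ((n : ℝ) + 1 + 2 * ρ₁ - 2 * r₂)
          / (4 * ((n : ℝ) + 1 + g))
      else ((n : ℝ) + 1 + 2 * g) * ((n : ℝ) + 1 + 2 * ρ₁ + 2 * ρ₂)
          / (4 * ((n : ℝ) + 1 + g)))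
    (hC : ∀ n : ℕ, Cf n = if Even n then
        -((n : ℝ) * ((n : ℝ) - 2 * r₁ - 2 * r₂)) / (4 * ((n : ℝ) + g))
      else -(((n : ℝ) - 2 * r₂ + 2 * ρ₂) * ((n : ℝ) - 2 * r₁ + 2 * ρ₂))
          / (4 * ((n : ℝ) + g)))
    (hveven : ∀ n : ℕ, v (2 * n) =
      -((n : ℝ) * ((n : ℝ) + ρ₁ - r₁ + 1 / 2) * ((n : ℝ) + ρ₁ - r₂ + 1 / 2)
          * ((n : ℝ) - r₁ - r₂)) / ((2 * (n : ℝ) + 1 + g) * (2 * (n : ℝ) + g)))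
    (hvodd : ∀ n : ℕ, v (2 * n + 1) =
      -(((n : ℝ) + g + 1) * ((n : ℝ) + ρ₁ + ρ₂ + 1) * ((n : ℝ) + ρ₂ - r₁ + 1 / 2)
          * ((n : ℝ) + ρ₂ - r₂ + 1 / 2))
        / ((2 * (n : ℝ) + 1 + g) * (2 * (n : ℝ) + g + 2))) :
    ∀ n : ℕ, ρ₁ - A n - Cf (n + 1) = (-1 : ℝ) ^ n * ρ₂ ∧ Cf n * A n = v n := by
  intro n
  rcases Nat.even_or_odd n with he | ho
  · obtain ⟨m, rfl⟩ := he
    rw [show m + m = 2 * m from (two_mul m).symm]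
    have heven : Even (2 * m) := ⟨m, two_mul m⟩
    have hodd : ¬ Even (2 * m + 1) := by
      simp only [Nat.even_add_one, not_not]; exact heven
    have d1 : 2 * (m : ℝ) + 1 + g ≠ 0 := by
      have := hden (2 * m + 1); push_cast at this; exact this
    have d2 : 2 * (m : ℝ) + g ≠ 0 := by
      have := hden (2 * m); push_cast at this; exact this
    have hp : ((-1 : ℝ)) ^ (2 * m) = 1 := by rw [pow_mul]; norm_num
    constructor
    · rw [hA, hC, if_pos heven, if_neg hodd, hp]
      push_cast
      field_simp
      rw [hg]
      ring
    · rw [hA, hC, if_pos heven, if_pos heven, hveven m]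
      push_cast
      field_simp
      ring
  · obtain ⟨m, rfl⟩ := ho
    have hodd : ¬ Even (2 * m + 1) := by
      simp only [Nat.even_add_one, not_not]; exact ⟨m, two_mul m⟩
    have heven : Even (2 * m + 1 + 1) := ⟨m + 1, by ring⟩
    have d1 : 2 * (m : ℝ) + 1 + g ≠ 0 := by
      have := hden (2 * m + 1); push_cast at this; exact this
    have d0 : 2 * (m : ℝ) + 2 + g ≠ 0 := by
      have := hden (2 * m + 2); push_cast at this; exact this
    have d2 : 2 * (m : ℝ) + 1 + 1 + g ≠ 0 := fun h => d0 (by linarith)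
    have d3 : 2 * (m : ℝ) + g + 2 ≠ 0 := fun h => d0 (by linarith)
    have hp : ((-1 : ℝ)) ^ (2 * m + 1) = -1 := by rw [pow_succ, pow_mul]; norm_num
    constructor
    · rw [hA, hC, if_neg hodd, if_pos heven, hp]
      push_cast
      field_simp
      rw [hg]
      ring
    · rw [hA, hC, if_neg hodd, if_neg hodd, hvodd m]
      push_cast
      field_simp
      ring

/-- The companion (complementary Bannai-Ito) polynomials
`W_n = (P_{n+1} − A_n P_n)/(x − ρ₁)` of the Bannai-Ito polynomials satisfy
`W_{n+1} + (−1)^n ρ₂ W_n + v_n W_{n−1} = x W_n`, i.e. the recurrence coefficients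
satisfy `ρ₁ − A_n − C_{n+1} = (−1)^n ρ₂` and `C_n A_n = v_n` with the explicit
`v_{2n}`, `v_{2n+1}` given below, `g = ρ₁ + ρ₂ − r₁ − r₂`. -/
theorem bannai_ito_companion_recurrence (ρ₁ ρ₂ r₁ r₂ g : ℝ)
    (hg : g = ρ₁ + ρ₂ - r₁ - r₂)
    (hden : ∀ n : ℕ, (n : ℝ) + g ≠ 0)
    (A Cf v : ℕ → ℝ)
    (hA : ∀ n : ℕ, A n = if Even n then
        ((n : ℝ) + 1 + 2 * ρ₁ - 2 * r₁) * ((n : ℝ) + 1 + 2 * ρ₁ - 2 * r₂)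
          / (4 * ((n : ℝ) + 1 + g))
      else ((n : ℝ) + 1 + 2 * g) * ((n : ℝ) + 1 + 2 * ρ₁ + 2 * ρ₂)
          / (4 * ((n : ℝ) + 1 + g)))
    (hC : ∀ n : ℕ, Cf n = if Even n then
        -((n : ℝ) * ((n : ℝ) - 2 * r₁ - 2 * r₂)) / (4 * ((n : ℝ) + g))
      else -(((n : ℝ) - 2 * r₂ + 2 * ρ₂) * ((n : ℝ) - 2 * r₁ + 2 * ρ₂))
          / (4 * ((n : ℝ) + g)))
    (hveven : ∀ n : ℕ, v (2 * n) =
      -((n : ℝ) * ((n : ℝ) + ρ₁ - r₁ + 1 / 2) * ((n : ℝ) + ρ₁ - r₂ + 1 / 2)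
          * ((n : ℝ) - r₁ - r₂)) / ((2 * (n : ℝ) + 1 + g) * (2 * (n : ℝ) + g)))
    (hvodd : ∀ n : ℕ, v (2 * n + 1) =
      -(((n : ℝ) + g + 1) * ((n : ℝ) + ρ₁ + ρ₂ + 1) * ((n : ℝ) + ρ₂ - r₁ + 1 / 2)
          * ((n : ℝ) + ρ₂ - r₂ + 1 / 2))
        / ((2 * (n : ℝ) + 1 + g) * (2 * (n : ℝ) + g + 2)))
    (P W : ℕ → Polynomial ℝ)
    (hP0 : P 0 = 1) (hP1 : P 1 = X - C ρ₁ + C (A 0))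
    (hPrec : ∀ n : ℕ, P (n + 2) + C (ρ₁ - A (n + 1) - Cf (n + 1)) * P (n + 1)
        + C (A n * Cf (n + 1)) * P n = X * P (n + 1))
    (hW : ∀ n : ℕ, (X - C ρ₁) * W n = P (n + 1) - C (A n) * P n) :
    (∀ n : ℕ, ρ₁ - A n - Cf (n + 1) = (-1 : ℝ) ^ n * ρ₂ ∧ Cf n * A n = v n) ∧
    (W 1 + C ρ₂ * W 0 = X * W 0) ∧
    (∀ n : ℕ, W (n + 2) + C ((-1 : ℝ) ^ (n + 1) * ρ₂) * W (n + 1)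
        + C (v (n + 1)) * W n = X * W (n + 1)) := by
  have key := bi_key ρ₁ ρ₂ r₁ r₂ g hg hden A Cf v hA hC hveven hvodd
  refine ⟨key, ?_, ?_⟩
  · have hρ : ρ₂ = ρ₁ - A 0 - Cf 1 := by
      have := (key 0).1; simpa using this.symm
    exact bi_base ρ₁ ρ₂ (A 0) (A 1) (Cf 1) hρ (P 0) (P 1) (P 2) (W 0) (W 1)
      hP0 hP1 (hPrec 0) (hW 0) (hW 1)
  · intro n
    have h1 : (-1 : ℝ) ^ (n + 1) * ρ₂ = ρ₁ - A (n + 1) - Cf (n + 2) := (key (n + 1)).1.symm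
    have h2 : v (n + 1) = Cf (n + 1) * A (n + 1) := (key (n + 1)).2.symm
    exact bi_step ρ₁ _ _ (A n) (A (n + 1)) (A (n + 2)) (Cf (n + 1)) (Cf (n + 2))
      h1 h2 (P n) (P (n + 1)) (P (n + 2)) (P (n + 3)) (W n) (W (n + 1)) (W (n + 2))
      (hPrec n) (hPrec (n + 1)) (hW n) (hW (n + 1)) (hW (n + 2))
end
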